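/- arXiv:2503.10013 — 3 statements merged into one kernel-verified Lean document; each statement's English description precedes it below -/
import Mathlib

section
/- Let K ⊆ ℝ^n be a nonempty compact convex set, let d ∈ ℤ⁺, let f_1, …, f_t : ℝ^n → ℝ each be λ-strongly convex over K (λ > 0) with ‖∇f_s(x)‖₂ ≤ G for all x ∈ K and all s ≤ t, let F_t satisfy {1,…,t−d} ⊆ F_t ⊆ {1,…,t−1}, let x_t be a minimizer over K of Σ_{s∈F_t} f_s(x), and let x̃_t be a minimizer over K of Σ_{s=1}^t f_s(x). Then ‖x_t − x̃_t‖₂ ≤ 2dG/(tλ). -/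
/-!
Both decisions minimise strongly convex objectives over `K`. The ideal objective `∑_{s ≤ t} f_s`
is `tλ`-strongly convex, so it grows by at least `tλ/2 · ‖x_t − x̃_t‖²` from its minimiser `x̃_t`
to `x_t`. The two objectives differ only by the at most `d` rounds of `{1,…,t} \ F_t`, and on
those rounds the first-order bound makes `f_s(x_t) − f_s(x̃_t) ≤ G ‖x_t − x̃_t‖`, which leaves
`tλ/2 · r² ≤ d G r` for `r = ‖x_t − x̃_t‖`.
-/

open Filter Topology Finset
open scoped RealInnerProductSpace

section StrongConvexity

variable {E : Type*} [NormedAddCommGroup E] [InnerProductSpace ℝ E] {s : Set E} {m : ℝ}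
  {f : E → ℝ}

/-- `g` need not be a derivative of `f`: any function satisfying the first-order inequality
will do. -/
theorem strongConvexOn_of_forall_add_inner_le (hs : Convex ℝ s) (g : E → E)
    (h : ∀ x ∈ s, ∀ y ∈ s, f x + ⟪g x, y - x⟫ + m / 2 * ‖x - y‖ ^ 2 ≤ f y) :
    StrongConvexOn s m f := by
  refine ⟨hs, fun x hx y hy a b ha hb hab ↦ ?_⟩
  have hz : a • x + b • y ∈ s := hs hx hy ha hb hab
  obtain rfl : b = 1 - a := eq_sub_of_add_eq' hab
  have hx' := h _ hz x hx
  have hy' := h _ hz y hy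
  rw [show x - (a • x + (1 - a) • y) = (1 - a) • (x - y) by module, real_inner_smul_right,
    show a • x + (1 - a) • y - x = (a - 1) • (x - y) by module, norm_smul, Real.norm_eq_abs,
    abs_sub_comm, abs_of_nonneg hb] at hx'
  rw [show y - (a • x + (1 - a) • y) = (-a) • (x - y) by module, real_inner_smul_right,
    show a • x + (1 - a) • y - y = a • (x - y) by module, norm_smul, Real.norm_of_nonneg ha] at hy'
  simp only [smul_eq_mul]
  nlinarith [mul_le_mul_of_nonneg_left hx' ha, mul_le_mul_of_nonneg_left hy' hb]

theorem StrongConvexOn.sum {ι : Type*} {S : Finset ι} {m : ι → ℝ} {f : ι → E → ℝ}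
    (hs : Convex ℝ s) (hf : ∀ i ∈ S, StrongConvexOn s (m i) (f i)) :
    StrongConvexOn s (∑ i ∈ S, m i) fun x ↦ ∑ i ∈ S, f i x := by
  refine ⟨hs, fun x hx y hy a b ha hb hab ↦ ?_⟩
  have := sum_le_sum fun i hi ↦ (hf i hi).2 hx hy ha hb hab
  simp only [smul_eq_mul, sum_sub_distrib, sum_add_distrib, ← mul_sum, ← sum_mul, ← sum_div] at this ⊢
  linarith

theorem StrongConvexOn.add_half_mul_sq_le_of_isMinOn {u v : E} (hf : StrongConvexOn s m f)
    (hmin : IsMinOn f s u) (hu : u ∈ s) (hv : v ∈ s) :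
    f u + m / 2 * ‖u - v‖ ^ 2 ≤ f v := by
  have hsegment : ∀ θ ∈ Set.Ioc (0 : ℝ) 1, f u + (1 - θ) * (m / 2 * ‖u - v‖ ^ 2) ≤ f v := by
    rintro θ ⟨hθ0, hθ1⟩
    have hab : 1 - θ + θ = 1 := sub_add_cancel 1 θ
    have hconv := hf.2 hu hv (sub_nonneg.2 hθ1) hθ0.le hab
    have hmin_seg := isMinOn_iff.1 hmin _ (hf.1 hu hv (sub_nonneg.2 hθ1) hθ0.le hab)
    simp only [smul_eq_mul] at hconv
    refine le_of_mul_le_mul_left ?_ hθ0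
    nlinarith
  have hlim : Tendsto (fun θ : ℝ ↦ f u + (1 - θ) * (m / 2 * ‖u - v‖ ^ 2)) (𝓝[>] 0)
      (𝓝 (f u + m / 2 * ‖u - v‖ ^ 2)) := by
    have : Continuous fun θ : ℝ ↦ f u + (1 - θ) * (m / 2 * ‖u - v‖ ^ 2) := by fun_prop
    simpa using (this.tendsto 0).mono_left nhdsWithin_le_nhds
  exact le_of_tendsto hlim (eventually_of_mem (Ioc_mem_nhdsGT one_pos) hsegment)

theorem sub_le_norm_mul_norm_of_add_inner_add_le {x y g : E} (hm : 0 ≤ m)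
    (h : f x + ⟪g, y - x⟫ + m / 2 * ‖x - y‖ ^ 2 ≤ f y) : f x - f y ≤ ‖g‖ * ‖x - y‖ := by
  have hinner : -⟪g, y - x⟫ ≤ ‖g‖ * ‖x - y‖ := by
    rw [norm_sub_rev]; exact (neg_le_abs _).trans (abs_real_inner_le_norm g (y - x))
  nlinarith [sq_nonneg ‖x - y‖]

theorem StrongConvexOn.half_mul_sq_norm_sub_le_sum_sdiff {ι : Type*} [DecidableEq ι]
    {F T : Finset ι} {f : ι → E → ℝ} {u v : E} (hT : StrongConvexOn s m fun x ↦ ∑ i ∈ T, f i x) (hFT : F ⊆ T)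
    (hu : u ∈ s) (hv : v ∈ s) (hFu : IsMinOn (fun x ↦ ∑ i ∈ F, f i x) s u)
    (hTv : IsMinOn (fun x ↦ ∑ i ∈ T, f i x) s v) :
    m / 2 * ‖u - v‖ ^ 2 ≤ ∑ i ∈ T \ F, (f i u - f i v) := by
  have hgrowth := hT.add_half_mul_sq_le_of_isMinOn hTv hv hu
  have hF := isMinOn_iff.1 hFu v hv
  rw [norm_sub_rev] at hgrowth
  rw [sum_sub_distrib]
  simp only [← sum_sdiff hFT (f := fun i ↦ f i _)] at hgrowth
  linarith

end StrongConvexity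

theorem le_two_mul_div_of_half_mul_sq_le_mul {M C r : ℝ} (hM : 0 < M) (hC : 0 ≤ C) (hr : 0 ≤ r)
    (h : M / 2 * r ^ 2 ≤ C * r) : r ≤ 2 * C / M := by
  rw [le_div_iff₀ hM]
  rcases hr.eq_or_lt with rfl | hr
  · rw [zero_mul]; positivity
  · nlinarith

theorem ftdl_distance_to_ideal_delay_general {n : ℕ}
    (K : Set (EuclideanSpace ℝ (Fin n)))
    (hKcv : Convex ℝ K)
    (d t : ℕ) (ht : 1 ≤ t)
    (f : ℕ → EuclideanSpace ℝ (Fin n) → ℝ)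
    (lam G : ℝ) (hlam : 0 < lam)
    (hsc : ∀ s ∈ Finset.Icc 1 t, ∀ x ∈ K, ∀ y ∈ K,
      f s x + ⟪gradient (f s) x, y - x⟫ + lam / 2 * ‖x - y‖ ^ 2 ≤ f s y)
    (hG : ∀ s ∈ Finset.Icc 1 t, ∀ x ∈ K, ‖gradient (f s) x‖ ≤ G)
    (F : Finset ℕ)
    (hF1 : Finset.Icc 1 (t - d) ⊆ F) (hF2 : F ⊆ Finset.Icc 1 (t - 1))
    (xt xtilde : EuclideanSpace ℝ (Fin n))
    (hxtK : xt ∈ K)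
    (hxtmin : ∀ y ∈ K, ∑ s ∈ F, f s xt ≤ ∑ s ∈ F, f s y)
    (hxtildeK : xtilde ∈ K)
    (hxtildemin : ∀ y ∈ K,
      ∑ s ∈ Finset.Icc 1 t, f s xtilde ≤ ∑ s ∈ Finset.Icc 1 t, f s y) :
    ‖xt - xtilde‖ ≤ 2 * d * G / ((t : ℝ) * lam) := by
  set T := Icc 1 t
  have hFT : F ⊆ T := hF2.trans (Icc_subset_Icc_right (Nat.sub_le t 1))
  have hcard : #(T \ F) ≤ d := by
    have := card_le_card hF1
    rw [Nat.card_Icc] at this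
    rw [card_sdiff_of_subset hFT, Nat.card_Icc]
    omega
  have hG0 : 0 ≤ G := (norm_nonneg _).trans (hG 1 (by simp [T, ht]) xt hxtK)
  have hconv : StrongConvexOn K (t * lam) fun x ↦ ∑ s ∈ T, f s x := by
    simpa [T] using StrongConvexOn.sum hKcv fun s hs ↦
      strongConvexOn_of_forall_add_inner_le hKcv _ (hsc s hs)
  have hgap := hconv.half_mul_sq_norm_sub_le_sum_sdiff hFT hxtK hxtildeK
    (isMinOn_iff.2 hxtmin) (isMinOn_iff.2 hxtildemin)
  have hmissing : ∑ s ∈ T \ F, (f s xt - f s xtilde) ≤ d * G * ‖xt - xtilde‖ := calc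
    _ ≤ #(T \ F) • (G * ‖xt - xtilde‖) := sum_le_card_nsmul _ _ _ fun s hs ↦
        (sub_le_norm_mul_norm_of_add_inner_add_le hlam.le
          (hsc s (sdiff_subset hs) xt hxtK xtilde hxtildeK)).trans
        (mul_le_mul_of_nonneg_right (hG s (sdiff_subset hs) xt hxtK) (norm_nonneg _))
    _ ≤ d * G * ‖xt - xtilde‖ := by
        rw [nsmul_eq_mul, ← mul_assoc]
        gcongr
  rw [mul_assoc]
  exact le_two_mul_div_of_half_mul_sq_le_mul (by positivity) (by positivity) (norm_nonneg _)
    (by linarith)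

/-- With delayed feedback set `{1,…,t−d} ⊆ F_t ⊆ {1,…,t−1}`, the FTDL
decision is close to the ideal be-the-leader decision: `‖x_t − x̃_t‖₂ ≤ 2dG/(tλ)`. -/
theorem ftdl_distance_to_ideal_delay {n : ℕ}
    (K : Set (EuclideanSpace ℝ (Fin n)))
    (hKne : K.Nonempty) (hKcp : IsCompact K) (hKcv : Convex ℝ K)
    (d t : ℕ) (hd : 1 ≤ d) (ht : 1 ≤ t)
    (f : ℕ → EuclideanSpace ℝ (Fin n) → ℝ)
    (lam G : ℝ) (hlam : 0 < lam)
    (hsc : ∀ s ∈ Finset.Icc 1 t, ∀ x ∈ K, ∀ y ∈ K,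
      f s x + ⟪gradient (f s) x, y - x⟫ + lam / 2 * ‖x - y‖ ^ 2 ≤ f s y)
    (hG : ∀ s ∈ Finset.Icc 1 t, ∀ x ∈ K, ‖gradient (f s) x‖ ≤ G)
    (F : Finset ℕ)
    (hF1 : Finset.Icc 1 (t - d) ⊆ F) (hF2 : F ⊆ Finset.Icc 1 (t - 1))
    (xt xtilde : EuclideanSpace ℝ (Fin n))
    (hxtK : xt ∈ K)
    (hxtmin : ∀ y ∈ K, ∑ s ∈ F, f s xt ≤ ∑ s ∈ F, f s y)
    (hxtildeK : xtilde ∈ K)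
    (hxtildemin : ∀ y ∈ K,
      ∑ s ∈ Finset.Icc 1 t, f s xtilde ≤ ∑ s ∈ Finset.Icc 1 t, f s y) :
    ‖xt - xtilde‖ ≤ 2 * d * G / ((t : ℝ) * lam) :=
  ftdl_distance_to_ideal_delay_general K hKcv d t ht f lam G hlam hsc hG F hF1 hF2 xt xtilde hxtK
    hxtmin hxtildeK hxtildemin
end

section
/- Let K ⊆ ℝ^n be a nonempty compact convex set, let z_1, …, z_t ∈ ℝ^n, let λ > 0, and suppose the surrogate functions f̃_s(x) = ⟨z_s, x⟩ + (λ/2)‖x‖₂² satisfy ‖∇f̃_s(x)‖₂ ≤ L for all x ∈ K and all s ≤ t. Let F ⊆ {1,…,t} be a subset, let x_t be a minimizer over K of Σ_{s∈F} f̃_s(x), and let x̃_t be a minimizer over K of Σ_{s=1}^t f̃_s(x). Then ‖x_t − x̃_t‖₂ ≤ 2(t − |F|)L/(tλ). -/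
/-!
The full surrogate sum `Φ = ∑_{s ≤ t} f̃_s` is `tλ`-strongly convex, so at its minimiser `x̃_t`
over `K` it grows quadratically: `Φ x̃_t + tλ/2 ‖x_t - x̃_t‖² ≤ Φ x_t`. On the other hand, the
terms indexed by `F` contribute at most `0` to `Φ x_t - Φ x̃_t` because `x_t` minimises their sum,
and each of the remaining `t - |F|` terms is `L`-Lipschitz on `K` by the mean value theorem.
Comparing the two bounds gives `tλ/2 d² ≤ (t - |F|) L d` for `d = ‖x_t - x̃_t‖`.
-/

open scoped RealInnerProductSpace

open Filter Topology

section StrongConvexity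

variable {E : Type*} [NormedAddCommGroup E] [NormedSpace ℝ E] {s : Set E} {f : E → ℝ} {m : ℝ}
  {x y : E}

theorem StrongConvexOn.add_sq_norm_sub_le_of_isMinOn (hf : StrongConvexOn s m f)
    (hmin : IsMinOn f s x) (hx : x ∈ s) (hy : y ∈ s) :
    f x + m / 2 * ‖y - x‖ ^ 2 ≤ f y := by
  set c := m / 2 * ‖y - x‖ ^ 2
  have hsegment : ∀ θ : ℝ, 0 < θ → θ < 1 → f x + (1 - θ) * c ≤ f y := by
    intro θ hθ0 hθ1
    have h1θ : 0 ≤ 1 - θ := by linarith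
    have hconv : f (θ • y + (1 - θ) • x) ≤ θ * f y + (1 - θ) * f x - θ * (1 - θ) * c :=
      hf.2 hy hx hθ0.le h1θ (by ring)
    have hle : f x ≤ f (θ • y + (1 - θ) • x) := hmin (hf.1 hy hx hθ0.le h1θ (by ring))
    have key : θ * (f x + (1 - θ) * c) ≤ θ * f y := by linarith
    exact le_of_mul_le_mul_left key hθ0
  have hlim : Tendsto (fun θ : ℝ ↦ f x + (1 - θ) * c) (𝓝[>] 0) (𝓝 (f x + c)) := by
    have hcont : Continuous fun θ : ℝ ↦ f x + (1 - θ) * c := by fun_prop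
    simpa using (hcont.tendsto 0).mono_left nhdsWithin_le_nhds
  refine le_of_tendsto hlim ?_
  filter_upwards [Ioo_mem_nhdsGT one_pos] with θ hθ using hsegment θ hθ.1 hθ.2

end StrongConvexity

section InnerProductSpace

variable {E : Type*} [NormedAddCommGroup E] [InnerProductSpace ℝ E] {ι : Type*}

theorem strongConvexOn_sum_inner_add_sq_norm {s : Set E} (hs : Convex ℝ s) (S : Finset ι)
    (z : ι → E) (lam : ℝ) :
    StrongConvexOn s (S.card * lam) fun x ↦ ∑ i ∈ S, (⟪z i, x⟫ + lam / 2 * ‖x‖ ^ 2) := by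
  rw [strongConvexOn_iff_convex]
  refine ((innerₛₗ ℝ (∑ i ∈ S, z i)).convexOn hs).congr fun x _ ↦ ?_
  simp only [coe_innerₛₗ_apply, Finset.sum_add_distrib, Finset.sum_const, nsmul_eq_mul, sum_inner]
  ring

theorem Convex.norm_image_sub_le_of_norm_gradient_le [CompleteSpace E] {s : Set E} {f : E → ℝ}
    {C : ℝ} (hf : ∀ x ∈ s, DifferentiableAt ℝ f x) (bound : ∀ x ∈ s, ‖gradient f x‖ ≤ C)
    (hs : Convex ℝ s) {x y : E} (hx : x ∈ s) (hy : y ∈ s) :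
    ‖f y - f x‖ ≤ C * ‖y - x‖ :=
  hs.norm_image_sub_le_of_norm_fderiv_le hf
    (fun z hz ↦ by simpa [← toDual_gradient] using bound z hz) hx hy

end InnerProductSpace

theorem Finset.sum_sub_sum_le_card_sdiff_mul {ι : Type*} [DecidableEq ι] {S F : Finset ι}
    (hF : F ⊆ S) {f g : ι → ℝ} {C : ℝ} (hFle : ∑ i ∈ F, f i ≤ ∑ i ∈ F, g i)
    (hle : ∀ i ∈ S \ F, f i - g i ≤ C) :
    ∑ i ∈ S, f i - ∑ i ∈ S, g i ≤ (S \ F).card * C := by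
  rw [← Finset.sum_sub_distrib, ← Finset.sum_sdiff hF, ← nsmul_eq_mul]
  have hrest := Finset.sum_le_card_nsmul _ _ _ hle
  have hF0 : ∑ i ∈ F, (f i - g i) ≤ 0 := by
    rw [Finset.sum_sub_distrib]; linarith
  linarith

theorem le_div_of_mul_sq_le_mul {a b d : ℝ} (ha : 0 < a) (hb : 0 ≤ b) (hd : 0 ≤ d)
    (h : a * d ^ 2 ≤ b * d) : d ≤ b / a := by
  rcases hd.eq_or_lt with rfl | hd
  · positivity
  · rw [le_div_iff₀ ha]
    nlinarith

theorem approximate_ftdl_distance_to_ideal_general {n : ℕ}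
    (K : Set (EuclideanSpace ℝ (Fin n)))
    (hKcv : Convex ℝ K)
    (t : ℕ) (ht : 1 ≤ t)
    (z : ℕ → EuclideanSpace ℝ (Fin n))
    (lam L : ℝ) (hlam : 0 < lam)
    (hL : ∀ s ∈ Finset.Icc 1 t, ∀ x ∈ K,
      ‖gradient (fun u : EuclideanSpace ℝ (Fin n) => ⟪z s, u⟫ + lam / 2 * ‖u‖ ^ 2) x‖
        ≤ L)
    (F : Finset ℕ) (hF : F ⊆ Finset.Icc 1 t)
    (xt xtilde : EuclideanSpace ℝ (Fin n))
    (hxtK : xt ∈ K)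
    (hxtmin : ∀ y ∈ K,
      ∑ s ∈ F, (⟪z s, xt⟫ + lam / 2 * ‖xt‖ ^ 2)
        ≤ ∑ s ∈ F, (⟪z s, y⟫ + lam / 2 * ‖y‖ ^ 2))
    (hxtildeK : xtilde ∈ K)
    (hxtildemin : ∀ y ∈ K,
      ∑ s ∈ Finset.Icc 1 t, (⟪z s, xtilde⟫ + lam / 2 * ‖xtilde‖ ^ 2)
        ≤ ∑ s ∈ Finset.Icc 1 t, (⟪z s, y⟫ + lam / 2 * ‖y‖ ^ 2)) :
    ‖xt - xtilde‖ ≤ 2 * ((t : ℝ) - (F.card : ℝ)) * L / ((t : ℝ) * lam) := by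
  have hcard : ((Finset.Icc 1 t \ F).card : ℝ) = t - F.card := by
    rw [Finset.card_sdiff_of_subset hF, Nat.card_Icc, Nat.add_sub_cancel,
      Nat.cast_sub (by simpa using Finset.card_le_card hF)]
  have hgrowth := (strongConvexOn_sum_inner_add_sq_norm hKcv (Finset.Icc 1 t) z lam
    ).add_sq_norm_sub_le_of_isMinOn hxtildemin hxtildeK hxtK
  have hlip : ∀ s ∈ Finset.Icc 1 t,
      ⟪z s, xt⟫ + lam / 2 * ‖xt‖ ^ 2 - (⟪z s, xtilde⟫ + lam / 2 * ‖xtilde‖ ^ 2)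
        ≤ L * ‖xt - xtilde‖ := fun s hs ↦
    (le_abs_self _).trans <| hKcv.norm_image_sub_le_of_norm_gradient_le
      (fun x _ ↦ ((differentiableAt_const _).inner ℝ differentiableAt_id).add
        ((differentiableAt_id.norm_sq ℝ).const_mul _)) (hL s hs) hxtildeK hxtK
  have hgap := Finset.sum_sub_sum_le_card_sdiff_mul hF (hxtmin xtilde hxtildeK)
    fun s hs ↦ hlip s (Finset.mem_sdiff.1 hs).1
  have hL0 : 0 ≤ L := (norm_nonneg _).trans (hL 1 (Finset.mem_Icc.2 ⟨le_rfl, ht⟩) xt hxtK)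
  have ht0 : (0 : ℝ) < t := by exact_mod_cast ht
  simp only [Nat.card_Icc, Nat.add_sub_cancel] at hgrowth
  rw [hcard] at hgap
  refine le_div_of_mul_sq_le_mul (by positivity) ?_ (norm_nonneg _) (by nlinarith)
  rw [← hcard]
  positivity

/-- Distance between the approximate-FTDL decision (computed from a
partial feedback set `F ⊆ {1,…,t}` of surrogate losses) and the ideal be-the-leader
decision on the surrogates: `‖x_t − x̃_t‖₂ ≤ 2(t − |F|)L/(tλ)`. -/
theorem approximate_ftdl_distance_to_ideal {n : ℕ}
    (K : Set (EuclideanSpace ℝ (Fin n)))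
    (hKne : K.Nonempty) (hKcp : IsCompact K) (hKcv : Convex ℝ K)
    (t : ℕ) (ht : 1 ≤ t)
    (z : ℕ → EuclideanSpace ℝ (Fin n))
    (lam L : ℝ) (hlam : 0 < lam)
    (hL : ∀ s ∈ Finset.Icc 1 t, ∀ x ∈ K,
      ‖gradient (fun u : EuclideanSpace ℝ (Fin n) => ⟪z s, u⟫ + lam / 2 * ‖u‖ ^ 2) x‖
        ≤ L)
    (F : Finset ℕ) (hF : F ⊆ Finset.Icc 1 t)
    (xt xtilde : EuclideanSpace ℝ (Fin n))
    (hxtK : xt ∈ K)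
    (hxtmin : ∀ y ∈ K,
      ∑ s ∈ F, (⟪z s, xt⟫ + lam / 2 * ‖xt‖ ^ 2)
        ≤ ∑ s ∈ F, (⟪z s, y⟫ + lam / 2 * ‖y‖ ^ 2))
    (hxtildeK : xtilde ∈ K)
    (hxtildemin : ∀ y ∈ K,
      ∑ s ∈ Finset.Icc 1 t, (⟪z s, xtilde⟫ + lam / 2 * ‖xtilde‖ ^ 2)
        ≤ ∑ s ∈ Finset.Icc 1 t, (⟪z s, y⟫ + lam / 2 * ‖y‖ ^ 2)) :
    ‖xt - xtilde‖ ≤ 2 * ((t : ℝ) - (F.card : ℝ)) * L / ((t : ℝ) * lam) :=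
  approximate_ftdl_distance_to_ideal_general K hKcv t ht z lam L hlam hL F hF xt xtilde hxtK hxtmin
    hxtildeK hxtildemin
end

section
/- Let K ⊆ ℝ^n be a nonempty compact convex set contained in the ball of radius R centered at the origin, let d ∈ ℤ⁺, let λ > 0 and G ≥ 0, let z_1, …, z_t ∈ ℝ^n satisfy ‖z_s‖₂ ≤ G + λR for all s ≤ t, and define f̃_s(x) = ⟨z_s, x⟩ + (λ/2)‖x‖₂². Let F_t satisfy {1,…,t−d} ⊆ F_t ⊆ {1,…,t−1}, let x_t be a minimizer over K of Σ_{s∈F_t} f̃_s(x), and let x̃_t be a minimizer over K of Σ_{s=1}^t f̃_s(x). Then ‖x_t − x̃_t‖₂ ≤ 2d(G + 2λR)/(tλ). -/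
/-!
The full objective `∑_{s ≤ t} f̃_s` is `tλ`-strongly convex, so the first-order optimality
condition at its minimiser `x̃_t` over `K` gives quadratic growth:
`(tλ/2)‖x_t − x̃_t‖² ≤ ∑_{s ≤ t} (f̃_s(x_t) − f̃_s(x̃_t))`. Since `x_t` minimises the partial sum
over `F_t`, only the at most `d` missing rounds `s ∉ F_t` contribute to the right-hand side, and
each contributes at most `(G + 2λR)‖x_t − x̃_t‖` because `f̃_s` is `(G + 2λR)`-Lipschitz on `K`.
-/

open scoped RealInnerProductSpace
open Finset

variable {E : Type*} [NormedAddCommGroup E] [InnerProductSpace ℝ E]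

theorem inner_add_mul_norm_sq_add_le_of_isMinOn {K : Set E} (hK : Convex ℝ K) {w x y : E}
    {c : ℝ} (hmin : IsMinOn (fun u => ⟪w, u⟫ + c * ‖u‖ ^ 2) K x) (hx : x ∈ K) (hy : y ∈ K) :
    ⟪w, x⟫ + c * ‖x‖ ^ 2 + c * ‖y - x‖ ^ 2 ≤ ⟪w, y⟫ + c * ‖y‖ ^ 2 := by
  have hderiv : HasFDerivAt (fun u => ⟪w, u⟫ + c * ‖u‖ ^ 2)
      (innerSL ℝ w + c • (2 • innerSL ℝ x)) x :=
    (innerSL ℝ w).hasFDerivAt.add ((hasStrictFDerivAt_norm_sq x).hasFDerivAt.const_mul c)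
  have hfirst := hmin.localize.hasFDerivWithinAt_nonneg hderiv.hasFDerivWithinAt
    (sub_mem_posTangentConeAt_of_segment_subset (hK.segment_subset hx hy))
  simp only [add_apply, smul_apply, innerSL_apply_apply, smul_eq_mul, nsmul_eq_mul,
    Nat.cast_ofNat, inner_sub_right, real_inner_self_eq_norm_sq] at hfirst
  rw [norm_sub_sq_real, real_inner_comm x y]
  linear_combination hfirst

noncomputable def surrogate (z : E) (lam : ℝ) (x : E) : ℝ := ⟪z, x⟫ + lam / 2 * ‖x‖ ^ 2

theorem surrogate_sub_surrogate_le {z x y : E} {lam B R : ℝ} (hlam : 0 ≤ lam) (hz : ‖z‖ ≤ B)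
    (hx : ‖x‖ ≤ R) (hy : ‖y‖ ≤ R) :
    surrogate z lam x - surrogate z lam y ≤ (B + lam * R) * ‖x - y‖ := by
  have hinner : ⟪z, x - y⟫ ≤ B * ‖x - y‖ :=
    (real_inner_le_norm z _).trans (mul_le_mul_of_nonneg_right hz (norm_nonneg _))
  have hnorm : ‖x‖ ^ 2 - ‖y‖ ^ 2 ≤ 2 * R * ‖x - y‖ := by
    have hdiff : ‖x‖ - ‖y‖ ≤ ‖x - y‖ := norm_sub_norm_le x y
    nlinarith [norm_nonneg x, norm_nonneg y, norm_nonneg (x - y)]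
  rw [inner_sub_right] at hinner
  unfold surrogate
  nlinarith [mul_le_mul_of_nonneg_left hnorm hlam]

variable {ι : Type*}

theorem sum_surrogate (S : Finset ι) (z : ι → E) (lam : ℝ) (x : E) :
    ∑ s ∈ S, surrogate (z s) lam x = ⟪∑ s ∈ S, z s, x⟫ + #S * (lam / 2) * ‖x‖ ^ 2 := by
  simp only [surrogate]
  rw [sum_add_distrib, ← sum_inner, sum_const, nsmul_eq_mul]
  ring

theorem sum_surrogate_add_mul_norm_sub_sq_le {K : Set E} (hK : Convex ℝ K) {T : Finset ι}
    {z : ι → E} {lam : ℝ} {x y : E}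
    (hmin : IsMinOn (fun u => ∑ s ∈ T, surrogate (z s) lam u) K x) (hx : x ∈ K) (hy : y ∈ K) :
    ∑ s ∈ T, surrogate (z s) lam x + #T * (lam / 2) * ‖y - x‖ ^ 2
      ≤ ∑ s ∈ T, surrogate (z s) lam y := by
  simp only [sum_surrogate] at hmin ⊢
  exact inner_add_mul_norm_sq_add_le_of_isMinOn hK hmin hx hy

theorem mul_norm_sub_sq_le_sum_sdiff [DecidableEq ι] {K : Set E} (hK : Convex ℝ K)
    {F T : Finset ι} (hFT : F ⊆ T) {z : ι → E} {lam : ℝ} {x x' : E}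
    (hmin : IsMinOn (fun u => ∑ s ∈ T, surrogate (z s) lam u) K x) (hx : x ∈ K) (hx' : x' ∈ K)
    (hmin' : ∑ s ∈ F, surrogate (z s) lam x' ≤ ∑ s ∈ F, surrogate (z s) lam x) :
    #T * (lam / 2) * ‖x' - x‖ ^ 2
      ≤ ∑ s ∈ T \ F, (surrogate (z s) lam x' - surrogate (z s) lam x) := by
  have hgrowth := sum_surrogate_add_mul_norm_sub_sq_le hK hmin hx hx'
  have hsplit' := sum_sdiff hFT (f := fun s => surrogate (z s) lam x')
  have hsplit := sum_sdiff hFT (f := fun s => surrogate (z s) lam x)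
  rw [sum_sub_distrib]
  linarith

theorem card_Icc_sdiff_le {F : Finset ℕ} {d t : ℕ} (hF : Icc 1 (t - d) ⊆ F) :
    #(Icc 1 t \ F) ≤ d := by
  calc #(Icc 1 t \ F) ≤ #(Icc 1 t \ Icc 1 (t - d)) := card_le_card (sdiff_subset_sdiff le_rfl hF)
    _ = t - (t - d) := by
      rw [card_sdiff_of_subset (Icc_subset_Icc_right (Nat.sub_le t d)), Nat.card_Icc,
        Nat.card_Icc, Nat.add_sub_cancel, Nat.add_sub_cancel]
    _ ≤ d := by omega

theorem approximate_ftdl_distance_to_ideal_delay_general {n : ℕ}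
    (K : Set (EuclideanSpace ℝ (Fin n)))
    (hKcv : Convex ℝ K)
    (R : ℝ) (hR : ∀ u ∈ K, ‖u‖ ≤ R)
    (d t : ℕ) (ht : 1 ≤ t)
    (lam G : ℝ) (hlam : 0 < lam) (hG : 0 ≤ G)
    (z : ℕ → EuclideanSpace ℝ (Fin n))
    (hz : ∀ s ∈ Finset.Icc 1 t, ‖z s‖ ≤ G + lam * R)
    (F : Finset ℕ)
    (hF1 : Finset.Icc 1 (t - d) ⊆ F) (hF2 : F ⊆ Finset.Icc 1 (t - 1))
    (xt xtilde : EuclideanSpace ℝ (Fin n))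
    (hxtK : xt ∈ K)
    (hxtmin : ∀ y ∈ K,
      ∑ s ∈ F, (⟪z s, xt⟫ + lam / 2 * ‖xt‖ ^ 2)
        ≤ ∑ s ∈ F, (⟪z s, y⟫ + lam / 2 * ‖y‖ ^ 2))
    (hxtildeK : xtilde ∈ K)
    (hxtildemin : ∀ y ∈ K,
      ∑ s ∈ Finset.Icc 1 t, (⟪z s, xtilde⟫ + lam / 2 * ‖xtilde‖ ^ 2)
        ≤ ∑ s ∈ Finset.Icc 1 t, (⟪z s, y⟫ + lam / 2 * ‖y‖ ^ 2)) :
    ‖xt - xtilde‖ ≤ 2 * d * (G + 2 * lam * R) / ((t : ℝ) * lam) := by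
  have hC : 0 ≤ G + 2 * lam * R := by nlinarith [norm_nonneg xt, hR xt hxtK]
  have hFT : F ⊆ Icc 1 t := hF2.trans (Icc_subset_Icc_right (Nat.sub_le t 1))
  have hgrowth := mul_norm_sub_sq_le_sum_sdiff hKcv hFT (isMinOn_iff.2 hxtildemin) hxtildeK hxtK
    (hxtmin xtilde hxtildeK)
  have hmissing : ∀ s ∈ Icc 1 t \ F, surrogate (z s) lam xt - surrogate (z s) lam xtilde
      ≤ (G + 2 * lam * R) * ‖xt - xtilde‖ := by
    intro s hs
    convert surrogate_sub_surrogate_le hlam.le (hz s (mem_sdiff.1 hs).1) (hR xt hxtK)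
      (hR xtilde hxtildeK) using 2
    ring
  have hkey : t * (lam / 2) * ‖xt - xtilde‖ ^ 2 ≤ d * ((G + 2 * lam * R) * ‖xt - xtilde‖) := by
    have hcard : (#(Icc 1 t \ F) : ℝ) ≤ d := by exact_mod_cast card_Icc_sdiff_le hF1
    have hsum := (sum_le_card_nsmul _ _ _ hmissing).trans' hgrowth
    rw [Nat.card_Icc, Nat.add_sub_cancel, nsmul_eq_mul] at hsum
    nlinarith [mul_nonneg hC (norm_nonneg (xt - xtilde))]
  obtain hN | hN := (norm_nonneg (xt - xtilde)).eq_or_lt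
  · rw [← hN]
    positivity
  · rw [le_div_iff₀ (by positivity)]
    nlinarith

/-- With delayed feedback set `{1,…,t−d} ⊆ F_t ⊆ {1,…,t−1}` and bounded
shared vectors `‖z_s‖ ≤ G + λR`, the approximate-FTDL decision satisfies
`‖x_t − x̃_t‖₂ ≤ 2d(G + 2λR)/(tλ)`. -/
theorem approximate_ftdl_distance_to_ideal_delay {n : ℕ}
    (K : Set (EuclideanSpace ℝ (Fin n)))
    (hKne : K.Nonempty) (hKcp : IsCompact K) (hKcv : Convex ℝ K)
    (R : ℝ) (hR : ∀ u ∈ K, ‖u‖ ≤ R)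
    (d t : ℕ) (hd : 1 ≤ d) (ht : 1 ≤ t)
    (lam G : ℝ) (hlam : 0 < lam) (hG : 0 ≤ G)
    (z : ℕ → EuclideanSpace ℝ (Fin n))
    (hz : ∀ s ∈ Finset.Icc 1 t, ‖z s‖ ≤ G + lam * R)
    (F : Finset ℕ)
    (hF1 : Finset.Icc 1 (t - d) ⊆ F) (hF2 : F ⊆ Finset.Icc 1 (t - 1))
    (xt xtilde : EuclideanSpace ℝ (Fin n))
    (hxtK : xt ∈ K)
    (hxtmin : ∀ y ∈ K,
      ∑ s ∈ F, (⟪z s, xt⟫ + lam / 2 * ‖xt‖ ^ 2)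
        ≤ ∑ s ∈ F, (⟪z s, y⟫ + lam / 2 * ‖y‖ ^ 2))
    (hxtildeK : xtilde ∈ K)
    (hxtildemin : ∀ y ∈ K,
      ∑ s ∈ Finset.Icc 1 t, (⟪z s, xtilde⟫ + lam / 2 * ‖xtilde‖ ^ 2)
        ≤ ∑ s ∈ Finset.Icc 1 t, (⟪z s, y⟫ + lam / 2 * ‖y‖ ^ 2)) :
    ‖xt - xtilde‖ ≤ 2 * d * (G + 2 * lam * R) / ((t : ℝ) * lam) :=
  approximate_ftdl_distance_to_ideal_delay_general K hKcv R hR d t ht lam G hlam hG z hz F hF1 hF2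
    xt xtilde hxtK hxtmin hxtildeK hxtildemin
end
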